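/- arXiv:2106.03423 — 4 statements merged into one kernel-verified Lean document; each statement's English description precedes it below -/
import Mathlib

section
/- For every function F in the Fock space, and every z ∈ ℂ, one has |F(z)|² e^{-π|z|²} ≤ ‖F‖²_{F²}, where ‖F‖²_{F²} = ∫_ℂ |F(z)|² e^{-π|z|²} dz. -/
open Real MeasureTheory Set

lemma fock_meanvalue (f : ℂ → ℂ) (hf : Differentiable ℂ f) {r : ℝ} (hr : 0 < r) :
    (∫ θ in (0)..(2*π), f (circleMap 0 r θ)) = (2*π : ℝ) • f 0 := by
  have h := (hf.diffContOnCl (s := Metric.ball (0:ℂ) r)).circleIntegral_sub_inv_smul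
      (w := 0) (Metric.mem_ball_self hr)
  simp only [circleIntegral, deriv_circleMap, sub_zero, smul_eq_mul] at h
  have h2 : ∀ θ : ℝ, circleMap 0 r θ * Complex.I * ((circleMap 0 r θ)⁻¹ * f (circleMap 0 r θ))
      = Complex.I * f (circleMap 0 r θ) := by
    intro θ
    have hne : circleMap 0 r θ ≠ 0 := circleMap_ne_center hr.ne'
    field_simp
  simp only [h2] at h
  rw [intervalIntegral.integral_const_mul] at h
  apply mul_left_cancel₀ Complex.I_ne_zero
  rw [h]
  rw [Complex.real_smul]
  push_cast
  ring

lemma fock_submean (G : ℂ → ℂ) (hG : Differentiable ℂ G) {r : ℝ} (hr : 0 < r) :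
    2 * π * ‖G 0‖ ^ 2 ≤ ∫ θ in Ioo (-π) π, ‖G (circleMap 0 r θ)‖ ^ 2 := by
  set f : ℂ → ℂ := fun z => (G z) ^ 2 with hfdef
  have hf : Differentiable ℂ f := hG.pow 2
  have hmv : (∫ θ in (0)..(2*π), f (circleMap 0 r θ)) = (2*π : ℝ) • f 0 :=
    fock_meanvalue f hf hr
  have hper : Function.Periodic (fun θ => f (circleMap 0 r θ)) (2*π) :=
    (periodic_circleMap 0 r).comp f
  have hshift : (∫ θ in (-π)..(-π + 2*π), f (circleMap 0 r θ))
      = ∫ θ in (0)..(0 + 2*π), f (circleMap 0 r θ) :=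
    hper.intervalIntegral_add_eq (-π) 0
  have h1 : (∫ θ in (-π)..π, f (circleMap 0 r θ)) = (2*π : ℝ) • f 0 := by
    have e : -π + 2*π = π := by ring
    rw [e, zero_add] at hshift
    rw [hshift, hmv]
  have hnorm : 2*π * ‖G 0‖^2 ≤ ∫ θ in (-π)..π, ‖f (circleMap 0 r θ)‖ := by
    have := intervalIntegral.norm_integral_le_integral_norm
      (f := fun θ => f (circleMap 0 r θ)) (μ := volume) (by linarith [pi_pos] : -π ≤ π)
    rw [h1] at this
    calc 2*π*‖G 0‖^2 = ‖(2*π : ℝ) • f 0‖ := by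
          rw [norm_smul, hfdef]
          simp only [Real.norm_eq_abs, abs_of_pos Real.two_pi_pos, norm_pow]
      _ ≤ _ := this
  calc 2*π*‖G 0‖^2 ≤ ∫ θ in (-π)..π, ‖f (circleMap 0 r θ)‖ := hnorm
    _ = ∫ θ in Ioo (-π) π, ‖G (circleMap 0 r θ)‖^2 := by
        rw [intervalIntegral.integral_of_le (by linarith [pi_pos] : -π ≤ π),
          ← integral_Ioc_eq_integral_Ioo]
        simp [hfdef, norm_pow]

lemma fock_integrableOn_polar {E : Type*} [NormedAddCommGroup E] [NormedSpace ℝ E]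
    (f : ℝ × ℝ → E) (hf : Integrable f) :
    IntegrableOn (fun p => p.1 • f (polarCoord.symm p)) polarCoord.target := by
  set B : ℝ × ℝ → ℝ × ℝ →L[ℝ] ℝ × ℝ := fun p =>
    LinearMap.toContinuousLinearMap (Matrix.toLin (Module.Basis.finTwoProd ℝ) (Module.Basis.finTwoProd ℝ)
      !![Real.cos p.2, -p.1 * Real.sin p.2; Real.sin p.2, p.1 * Real.cos p.2]) with hB
  have A : ∀ p ∈ polarCoord.target, HasFDerivWithinAt polarCoord.symm (B p) polarCoord.target p :=
    fun p _ => (hasFDerivAt_polarCoord_symm p).hasFDerivWithinAt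
  have B_det : ∀ p, (B p).det = p.1 := by
    intro p
    conv_rhs => rw [← one_mul p.1, ← cos_sq_add_sin_sq p.2]
    simp only [hB, neg_mul, LinearMap.det_toContinuousLinearMap, LinearMap.det_toLin,
      Matrix.det_fin_two_of, sub_neg_eq_add]
    ring
  have himg : polarCoord.symm '' polarCoord.target = polarCoord.source := by
    rw [show polarCoord.target = polarCoord.symm.source from rfl]
    exact polarCoord.symm.image_source_eq_target
  have hsrc : IntegrableOn f polarCoord.source := hf.integrableOn
  have key := (integrableOn_image_iff_integrableOn_abs_det_fderiv_smul volume
    polarCoord.open_target.measurableSet A polarCoord.symm.injOn f).mp (by rwa [himg])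
  refine key.congr_fun (fun p hp => ?_) polarCoord.open_target.measurableSet
  dsimp only
  rw [B_det, abs_of_pos hp.1]

lemma fock_integrableOn_polar_complex {E : Type*} [NormedAddCommGroup E] [NormedSpace ℝ E]
    (f : ℂ → E) (hf : Integrable f) :
    IntegrableOn (fun p : ℝ × ℝ => p.1 • f (Complex.polarCoord.symm p)) polarCoord.target := by
  have hf' : Integrable (f ∘ Complex.measurableEquivRealProd.symm) :=
    ((Complex.volume_preserving_equiv_real_prod.symm).integrable_comp
      hf.aestronglyMeasurable).mpr hf
  exact fock_integrableOn_polar (f ∘ Complex.measurableEquivRealProd.symm) hf'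

lemma fock_symm_eq_circleMap (r θ : ℝ) : Complex.polarCoord.symm (r, θ) = circleMap 0 r θ := by
  simp [Complex.polarCoord_symm_apply, circleMap, Complex.exp_mul_I]

lemma fock_gauss_Ioi : ∫ r in Ioi (0:ℝ), r * Real.exp (-π * r^2) = (2*π)⁻¹ := by
  have hderiv : ∀ x ∈ Ici (0:ℝ),
      HasDerivAt (fun x : ℝ => -(2*π)⁻¹ * Real.exp (-π * x^2)) (x * Real.exp (-π * x^2)) x := by
    intro x _
    have h1 : HasDerivAt (fun x : ℝ => -π * x^2) (-π * (2*x)) x := by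
      simpa using (hasDerivAt_pow 2 x).const_mul (-π)
    have h2 := (h1.exp).const_mul (-(2*π)⁻¹)
    refine h2.congr_deriv ?_
    field_simp
  have htend : Filter.Tendsto (fun x : ℝ => -(2*π)⁻¹ * Real.exp (-π * x^2))
      Filter.atTop (nhds 0) := by
    have h1 : Filter.Tendsto (fun x : ℝ => -π * x^2) Filter.atTop Filter.atBot := by
      apply Filter.Tendsto.const_mul_atTop_of_neg (by linarith [pi_pos] : -π < 0)
      exact Filter.tendsto_pow_atTop two_ne_zero
    have h2 := (Real.tendsto_exp_atBot).comp h1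
    have := h2.const_mul (-(2*π)⁻¹)
    simpa using this
  have := integral_Ioi_of_hasDerivAt_of_tendsto' hderiv
    ((integrable_mul_exp_neg_mul_sq pi_pos).integrableOn) htend
  rw [this]
  simp

lemma fock_key (G : ℂ → ℂ) (hG : Differentiable ℂ G)
    (hInt : Integrable (fun w : ℂ => ‖G w‖ ^ 2 * Real.exp (-π * ‖w‖ ^ 2))) :
    ‖G 0‖ ^ 2 ≤ ∫ w : ℂ, ‖G w‖ ^ 2 * Real.exp (-π * ‖w‖ ^ 2) := by
  set g : ℂ → ℝ := fun w => ‖G w‖ ^ 2 * Real.exp (-π * ‖w‖ ^ 2) with hgdef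
  set c : ℝ := ‖G 0‖ ^ 2 with hcdef
  set μ : Measure ℝ := volume.restrict (Ioi (0:ℝ)) with hμdef
  set ν : Measure ℝ := volume.restrict (Ioo (-π) π) with hνdef
  set φ : ℝ × ℝ → ℝ := fun p => p.1 • g (Complex.polarCoord.symm p) with hφdef
  have hpolar : (∫ p in polarCoord.target, φ p) = ∫ w, g w :=
    Complex.integral_comp_polarCoord_symm g
  have htarget : polarCoord.target = Ioi (0:ℝ) ×ˢ Ioo (-π) π := rfl
  have hres : (volume : Measure (ℝ × ℝ)).restrict polarCoord.target = μ.prod ν := by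
    rw [htarget, hμdef, hνdef, Measure.prod_restrict, ← Measure.volume_eq_prod]
  have hprod : Integrable φ (μ.prod ν) := by
    rw [← hres]
    exact fock_integrableOn_polar_complex g hInt
  have hiter : (∫ p, φ p ∂(μ.prod ν)) = ∫ r, (∫ θ, φ (r, θ) ∂ν) ∂μ :=
    integral_prod φ hprod
  have hinner : ∀ r ∈ Ioi (0:ℝ),
      (2*π*c) * (r * Real.exp (-π * r^2)) ≤ ∫ θ, φ (r, θ) ∂ν := by
    intro r hr
    have hr' : (0:ℝ) < r := hr
    have hcm : ∀ θ : ℝ, φ (r, θ) = (r * Real.exp (-π * r^2)) * ‖G (circleMap 0 r θ)‖^2 := by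
      intro θ
      rw [hφdef]
      simp only [smul_eq_mul, fock_symm_eq_circleMap, hgdef]
      have : ‖circleMap 0 r θ‖ = r := by
        rw [norm_circleMap_zero, abs_of_pos hr']
      rw [this]
      ring
    calc (2*π*c) * (r * Real.exp (-π * r^2))
        = (r * Real.exp (-π * r^2)) * (2*π*c) := by ring
      _ ≤ (r * Real.exp (-π * r^2)) * ∫ θ, ‖G (circleMap 0 r θ)‖^2 ∂ν := by
          apply mul_le_mul_of_nonneg_left _ (by positivity)
          exact fock_submean G hG hr'
      _ = ∫ θ, φ (r, θ) ∂ν := by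
          rw [← integral_const_mul]
          exact integral_congr_ae (Filter.Eventually.of_forall fun θ => (hcm θ).symm)
  have hψint : Integrable (fun r => (2*π*c) * (r * Real.exp (-π * r^2))) μ :=
    ((integrable_mul_exp_neg_mul_sq pi_pos).integrableOn).const_mul _
  have hφinner : Integrable (fun r => ∫ θ, φ (r, θ) ∂ν) μ := hprod.integral_prod_left
  have hae : (fun r => (2*π*c) * (r * Real.exp (-π * r^2)))
      ≤ᵐ[μ] fun r => ∫ θ, φ (r, θ) ∂ν := by
    rw [hμdef]
    exact (ae_restrict_iff' measurableSet_Ioi).mpr (Filter.Eventually.of_forall hinner)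
  have hmono := integral_mono_ae hψint hφinner hae
  have hψval : (∫ r, (2*π*c) * (r * Real.exp (-π * r^2)) ∂μ) = c := by
    rw [integral_const_mul, hμdef, fock_gauss_Ioi]
    field_simp
  calc c = ∫ r, (2*π*c) * (r * Real.exp (-π * r^2)) ∂μ := hψval.symm
    _ ≤ ∫ r, (∫ θ, φ (r, θ) ∂ν) ∂μ := hmono
    _ = ∫ p, φ p ∂(μ.prod ν) := hiter.symm
    _ = ∫ p in polarCoord.target, φ p := by rw [hres]
    _ = ∫ w, g w := hpolar

lemma fock_weight_eq (F : ℂ → ℂ) (z w : ℂ) :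
    ‖F (w + z) * Complex.exp (-(π:ℂ) * (w * (starRingEnd ℂ) z) - (π:ℂ) * ((‖z‖:ℂ))^2 / 2)‖ ^ 2
      * Real.exp (-π * ‖w‖ ^ 2)
    = ‖F (w + z)‖ ^ 2 * Real.exp (-π * ‖w + z‖ ^ 2) := by
  rw [norm_mul, mul_pow, Complex.norm_exp]
  have hre : (-(π:ℂ) * (w * (starRingEnd ℂ) z) - (π:ℂ) * ((‖z‖:ℂ))^2 / 2).re
      = -π * (w * (starRingEnd ℂ) z).re - π * ‖z‖^2 / 2 := by
    simp [Complex.sub_re, Complex.mul_re, Complex.div_re, ← Complex.ofReal_pow]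
  have hnorm : ‖w + z‖^2 = ‖w‖^2 + 2*(w * (starRingEnd ℂ) z).re + ‖z‖^2 := by
    simp only [Complex.sq_norm]
    rw [Complex.normSq_add]
    ring
  have h2 : (Real.exp ((-(π:ℂ) * (w * (starRingEnd ℂ) z) - (π:ℂ) * ((‖z‖:ℂ))^2 / 2).re))^2
      * Real.exp (-π * ‖w‖^2) = Real.exp (-π * ‖w + z‖^2) := by
    rw [sq, ← Real.exp_add, ← Real.exp_add]
    congr 1
    rw [hre, hnorm]
    ring
  rw [mul_assoc, h2]

/-- Pointwise bound in the Fock space: for entire `F` with finite Fock norm,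
`|F z|² e^{-π|z|²} ≤ ‖F‖²_{F²}` for every `z`. -/
theorem fock_pointwise_bound
    (F : ℂ → ℂ) (hF : Differentiable ℂ F)
    (hInt : Integrable (fun z : ℂ => ‖F z‖ ^ 2 * Real.exp (-π * ‖z‖ ^ 2))) :
    ∀ z : ℂ, ‖F z‖ ^ 2 * Real.exp (-π * ‖z‖ ^ 2)
      ≤ ∫ w : ℂ, ‖F w‖ ^ 2 * Real.exp (-π * ‖w‖ ^ 2) := by
  intro z
  set G : ℂ → ℂ := fun w =>
    F (w + z) * Complex.exp (-(π:ℂ) * (w * (starRingEnd ℂ) z) - (π:ℂ) * ((‖z‖:ℂ))^2 / 2)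
    with hGdef
  have hGdiff : Differentiable ℂ G := by
    apply Differentiable.mul
    · exact hF.comp (differentiable_id.add_const z)
    · apply Complex.differentiable_exp.comp
      exact ((differentiable_id.mul_const _).const_mul _).sub_const _
  have hpt : ∀ w, ‖G w‖^2 * Real.exp (-π*‖w‖^2) = ‖F (w+z)‖^2 * Real.exp (-π*‖w+z‖^2) :=
    fun w => fock_weight_eq F z w
  have hIntG : Integrable (fun w : ℂ => ‖G w‖^2 * Real.exp (-π*‖w‖^2)) := by
    have h := hInt.comp_add_right z
    exact h.congr (Filter.Eventually.of_forall fun w => (hpt w).symm)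
  have hkey := fock_key G hGdiff hIntG
  have h0 : ‖G 0‖^2 = ‖F z‖^2 * Real.exp (-π*‖z‖^2) := by
    have h := hpt 0
    simpa using h
  have hint_eq : (∫ w : ℂ, ‖G w‖^2 * Real.exp (-π*‖w‖^2))
      = ∫ w : ℂ, ‖F w‖^2 * Real.exp (-π*‖w‖^2) := by
    calc (∫ w : ℂ, ‖G w‖^2 * Real.exp (-π*‖w‖^2))
        = ∫ w : ℂ, ‖F (w+z)‖^2 * Real.exp (-π*‖w+z‖^2) :=
          integral_congr_ae (Filter.Eventually.of_forall hpt)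
      _ = _ := integral_add_right_eq_self (fun w : ℂ => ‖F w‖^2 * Real.exp (-π*‖w‖^2)) z
  rw [← h0, ← hint_eq]
  exact hkey
end

section
/- Let u : ℝ² → [0,∞) be continuous, integrable, vanishing at infinity, with all level sets of measure zero, and let u* be its decreasing rearrangement. Then the function I(s) = ∫_{{u > u*(s)}} u(z) dz is C¹ on [0, ∞) with I'(s) = u*(s) for every s ≥ 0. -/
open Real MeasureTheory Filter ENNReal


private lemma mu_anti (u : ℂ → ℝ) {t1 t2 : ℝ} (h : t1 ≤ t2) :
    volume {z : ℂ | t2 < u z} ≤ volume {z : ℂ | t1 < u z} :=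
  measure_mono fun _ hz => lt_of_le_of_lt h hz

private lemma mu_fin (u : ℂ → ℝ) (hint : Integrable u) {t : ℝ} (ht : 0 < t) :
    volume {z : ℂ | t < u z} ≠ ∞ :=
  (hint.measure_gt_lt_top (ε := t) ht).ne

private lemma mu_meas (u : ℂ → ℝ) (hcont : Continuous u) (t : ℝ) :
    MeasurableSet {z : ℂ | t < u z} :=
  (isOpen_lt continuous_const hcont).measurableSet

-- right continuity style bound
private lemma mu_right (u : ℂ → ℝ) (a : ℝ) (c : ℝ≥0∞)
    (h : ∀ t, a < t → volume {z : ℂ | t < u z} ≤ c) :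
    volume {z : ℂ | a < u z} ≤ c := by
  have hU : {z : ℂ | a < u z} = ⋃ n : ℕ, {z : ℂ | a + 1/(n+1) < u z} := by
    ext z
    simp only [Set.mem_setOf_eq, Set.mem_iUnion]
    constructor
    · intro hz
      obtain ⟨n, hn⟩ := exists_nat_one_div_lt (sub_pos.mpr hz)
      exact ⟨n, by linarith [hn]⟩
    · rintro ⟨n, hn⟩
      have : (0:ℝ) < 1/(n+1) := by positivity
      linarith
  have hm : Monotone (fun n : ℕ => {z : ℂ | a + 1/(n+1) < u z}) := by
    intro n m hnm z hz
    simp only [Set.mem_setOf_eq] at *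
    have : (1:ℝ)/(m+1) ≤ 1/(n+1) := by
      apply one_div_le_one_div_of_le (by positivity)
      have : (n:ℝ) ≤ m := Nat.cast_le.mpr hnm
      linarith
    linarith
  rw [hU, hm.measure_iUnion]
  refine iSup_le fun n => h _ ?_
  have : (0:ℝ) < 1/(n+1) := by positivity
  linarith

private lemma mu_left (u : ℂ → ℝ) (hcont : Continuous u) (hint : Integrable u)
    (hlevel : ∀ t : ℝ, 0 < t → volume {z : ℂ | u z = t} = 0)
    {b : ℝ} (hb : 0 < b) (c : ℝ≥0∞)
    (h : ∀ t, 0 ≤ t → t < b → c ≤ volume {z : ℂ | t < u z}) :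
    c ≤ volume {z : ℂ | b < u z} := by
  have hIc : {z : ℂ | b ≤ u z} = ⋂ n : ℕ, {z : ℂ | b - b/(n+2) < u z} := by
    ext z
    simp only [Set.mem_setOf_eq, Set.mem_iInter]
    constructor
    · intro hz n
      have : (0:ℝ) < b/(n+2) := by positivity
      linarith
    · intro hz
      by_contra hlt
      push_neg at hlt
      obtain ⟨n, hn⟩ := exists_nat_one_div_lt (show (0:ℝ) < (b - u z)/b from div_pos (by linarith) hb)
      have e1 : b * (1/((n:ℝ)+1)) < b * ((b - u z)/b) := mul_lt_mul_of_pos_left hn hb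
      rw [mul_div_cancel₀ _ hb.ne'] at e1
      have e2 : b/((n:ℝ)+2) ≤ b/((n:ℝ)+1) := by gcongr <;> linarith
      have e3 : b * (1/((n:ℝ)+1)) = b/((n:ℝ)+1) := by ring
      have := hz n
      linarith
  -- each set in the intersection has c ≤ measure, and intersection is antitone with finite element
  have hmono : Antitone (fun n : ℕ => {z : ℂ | b - b/(n+2) < u z}) := by
    intro n m hnm z hz
    simp only [Set.mem_setOf_eq] at *
    have hc : (n:ℝ) ≤ (m:ℝ) := Nat.cast_le.mpr hnm
    have e2 : b/((m:ℝ)+2) ≤ b/((n:ℝ)+2) := by gcongr <;> linarith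
    linarith
  have hfin : ∃ n : ℕ, volume {z : ℂ | b - b/(n+2) < u z} ≠ ∞ := by
    refine ⟨0, ?_⟩
    have : (0:ℝ) < b - b/((0:ℕ)+2) := by norm_num; linarith
    exact mu_fin u hint this
  have hInt := Directed.measure_iInter (μ := volume)
    (fun n : ℕ => (mu_meas u hcont (b - b/(n+2))).nullMeasurableSet)
    (hmono.directed_ge) hfin
  have hle : c ≤ volume {z : ℂ | b ≤ u z} := by
    rw [hIc, hInt, le_iInf_iff]
    intro n
    refine h _ ?_ ?_
    · have h1 : b/((n:ℝ)+2) ≤ b/2 := by gcongr <;> linarith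
      have h2 : (0:ℝ) < b/2 := by positivity
      linarith
    · have : (0:ℝ) < b/(n+2) := by positivity
      linarith
  calc c ≤ volume {z : ℂ | b ≤ u z} := hle
    _ ≤ volume ({z : ℂ | b < u z} ∪ {z : ℂ | u z = b}) := by
        apply measure_mono
        intro z hz
        simp only [Set.mem_setOf_eq] at hz ⊢
        rcases lt_or_eq_of_le hz with h' | h'
        · exact Or.inl h'
        · exact Or.inr h'.symm
    _ ≤ volume {z : ℂ | b < u z} + volume {z : ℂ | u z = b} := measure_union_le _ _
    _ = volume {z : ℂ | b < u z} := by rw [hlevel b hb, add_zero]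

private lemma u_bdd (u : ℂ → ℝ) (hcont : Continuous u)
    (hdecay : Tendsto u (cocompact ℂ) (nhds 0)) :
    ∃ M : ℝ, 0 < M ∧ ∀ z, u z ≤ M := by
  have h1 : ∀ᶠ z in cocompact ℂ, u z < 1 := hdecay.eventually (eventually_lt_nhds zero_lt_one)
  rw [hasBasis_cocompact.eventually_iff] at h1
  obtain ⟨K, hK, hKu⟩ := h1
  rcases K.eq_empty_or_nonempty with hKe | hKne
  · refine ⟨1, zero_lt_one, fun z => ?_⟩
    exact (hKu (by simp [hKe])).le
  · obtain ⟨M0, hM0⟩ := (hK.image hcont).bddAbove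
    refine ⟨max M0 1, lt_of_lt_of_le zero_lt_one (le_max_right _ _), fun z => ?_⟩
    by_cases hz : z ∈ K
    · exact le_trans (hM0 (Set.mem_image_of_mem u hz)) (le_max_left _ _)
    · exact le_trans (hKu hz).le (le_max_right _ _)

private lemma mu_strict (u : ℂ → ℝ) (hcont : Continuous u) (hint : Integrable u)
    (hdecay : Tendsto u (cocompact ℂ) (nhds 0))
    {t1 t2 : ℝ} (h0 : 0 ≤ t1) (h12 : t1 < t2)
    (hpos : 0 < volume {z : ℂ | t2 < u z}) :
    volume {z : ℂ | t2 < u z} < volume {z : ℂ | t1 < u z} := by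
  have ht2 : 0 < t2 := lt_of_le_of_lt h0 h12
  obtain ⟨z2, hz2⟩ := nonempty_of_measure_ne_zero hpos.ne'
  have hmid : t1 < (t1+t2)/2 ∧ (t1+t2)/2 < t2 := ⟨by linarith, by linarith⟩
  have h1 : ∀ᶠ z in cocompact ℂ, u z < (t1+t2)/2 :=
    hdecay.eventually (eventually_lt_nhds (by linarith))
  obtain ⟨z1, hz1⟩ := h1.exists
  -- find a point with u value strictly between t1 and t2
  have hex : ∃ z : ℂ, t1 < u z ∧ u z < t2 := by
    by_cases hcase : t1 < u z1
    · exact ⟨z1, hcase, lt_trans hz1 hmid.2⟩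
    · push_neg at hcase
      have hIcc : (t1+t2)/2 ∈ Set.Icc (u z1) (u z2) :=
        ⟨le_trans hcase hmid.1.le, le_of_lt (lt_trans hmid.2 hz2)⟩
      obtain ⟨z, hz⟩ := intermediate_value_univ z1 z2 hcont hIcc
      exact ⟨z, by rw [hz]; exact hmid.1, by rw [hz]; exact hmid.2⟩
  have hopen : IsOpen {z : ℂ | t1 < u z ∧ u z < t2} :=
    (isOpen_lt continuous_const hcont).inter (isOpen_lt hcont continuous_const)
  have hposmid : 0 < volume {z : ℂ | t1 < u z ∧ u z < t2} := by
    obtain ⟨z, hz⟩ := hex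
    exact hopen.measure_pos volume ⟨z, hz⟩
  have hdisj : Disjoint {z : ℂ | t2 < u z} {z : ℂ | t1 < u z ∧ u z < t2} := by
    rw [Set.disjoint_left]
    rintro z hz ⟨_, hz2'⟩
    exact absurd hz (not_lt.mpr hz2'.le)
  calc volume {z : ℂ | t2 < u z}
      < volume {z : ℂ | t2 < u z} + volume {z : ℂ | t1 < u z ∧ u z < t2} :=
        ENNReal.lt_add_right (mu_fin u hint ht2) hposmid.ne'
    _ = volume ({z : ℂ | t2 < u z} ∪ {z : ℂ | t1 < u z ∧ u z < t2}) :=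
        (measure_union hdisj (hopen.measurableSet)).symm
    _ ≤ volume {z : ℂ | t1 < u z} := by
        apply measure_mono
        rintro z (hz | hz)
        · exact lt_trans h12 hz
        · exact hz.1

private lemma Tset_bdd (u : ℂ → ℝ) {M : ℝ} (hM : ∀ z, u z ≤ M) (s : ℝ) :
    BddAbove {t : ℝ | 0 ≤ t ∧ ENNReal.ofReal s < volume {z : ℂ | t < u z}} := by
  refine ⟨M, fun t ht => ?_⟩
  obtain ⟨_, hts⟩ := ht
  have hne : volume {z : ℂ | t < u z} ≠ 0 := (lt_of_le_of_lt zero_le hts).ne'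
  obtain ⟨z, hz⟩ := nonempty_of_measure_ne_zero hne
  exact le_of_lt (lt_of_lt_of_le hz (hM z))

private lemma ustar_nonneg (u : ℂ → ℝ) (ustar : ℝ → ℝ)
    (hustar : ∀ s, ustar s =
      sSup {t : ℝ | 0 ≤ t ∧ ENNReal.ofReal s < volume {z : ℂ | t < u z}}) (s : ℝ) :
    0 ≤ ustar s := by
  rw [hustar]
  exact Real.sSup_nonneg (fun t ht => ht.1)

private lemma ustar_anti (u : ℂ → ℝ) {M : ℝ} (hM : ∀ z, u z ≤ M) (ustar : ℝ → ℝ)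
    (hustar : ∀ s, ustar s =
      sSup {t : ℝ | 0 ≤ t ∧ ENNReal.ofReal s < volume {z : ℂ | t < u z}}) :
    Antitone ustar := by
  intro s1 s2 h12
  rw [hustar s2]
  refine Real.sSup_le (fun t ht => ?_) (ustar_nonneg u ustar hustar s1)
  rw [hustar s1]
  refine le_csSup (Tset_bdd u hM s1) ?_
  exact ⟨ht.1, lt_of_le_of_lt (ENNReal.ofReal_le_ofReal h12) ht.2⟩

private lemma ustar_pos (u : ℂ → ℝ) {M : ℝ} (hM : ∀ z, u z ≤ M) (ustar : ℝ → ℝ)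
    (hustar : ∀ s, ustar s =
      sSup {t : ℝ | 0 ≤ t ∧ ENNReal.ofReal s < volume {z : ℂ | t < u z}})
    {s : ℝ} (hs : ENNReal.ofReal s < volume {z : ℂ | 0 < u z}) :
    0 < ustar s := by
  by_contra hc
  push_neg at hc
  have h0 : ustar s = 0 := le_antisymm hc (ustar_nonneg u ustar hustar s)
  have : volume {z : ℂ | 0 < u z} ≤ ENNReal.ofReal s := by
    refine mu_right u 0 _ (fun t ht => ?_)
    by_contra hmu
    push_neg at hmu
    have : t ≤ ustar s := by
      rw [hustar]
      exact le_csSup (Tset_bdd u hM s) ⟨ht.le, hmu⟩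
    rw [h0] at this
    exact absurd this (not_le.mpr ht)
  exact absurd this (not_le.mpr hs)

private lemma ustar_mu_le (u : ℂ → ℝ) {M : ℝ} (hM : ∀ z, u z ≤ M) (ustar : ℝ → ℝ)
    (hustar : ∀ s, ustar s =
      sSup {t : ℝ | 0 ≤ t ∧ ENNReal.ofReal s < volume {z : ℂ | t < u z}}) (s : ℝ) :
    volume {z : ℂ | ustar s < u z} ≤ ENNReal.ofReal s := by
  refine mu_right u (ustar s) _ (fun t ht => ?_)
  by_contra hmu
  push_neg at hmu
  have h0 : 0 ≤ ustar s := ustar_nonneg u ustar hustar s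
  have : t ≤ ustar s := by
    rw [hustar]
    exact le_csSup (Tset_bdd u hM s) ⟨le_trans h0 ht.le, hmu⟩
  exact absurd this (not_le.mpr ht)

private lemma ustar_mu_eq (u : ℂ → ℝ) (hcont : Continuous u) (hint : Integrable u)
    (hlevel : ∀ t : ℝ, 0 < t → volume {z : ℂ | u z = t} = 0)
    {M : ℝ} (hM : ∀ z, u z ≤ M) (ustar : ℝ → ℝ)
    (hustar : ∀ s, ustar s =
      sSup {t : ℝ | 0 ≤ t ∧ ENNReal.ofReal s < volume {z : ℂ | t < u z}})
    {s : ℝ} (hs : ENNReal.ofReal s < volume {z : ℂ | 0 < u z}) :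
    volume {z : ℂ | ustar s < u z} = ENNReal.ofReal s := by
  refine le_antisymm (ustar_mu_le u hM ustar hustar s) ?_
  refine mu_left u hcont hint hlevel (ustar_pos u hM ustar hustar hs) _ (fun t ht htlt => ?_)
  have hne : {t : ℝ | 0 ≤ t ∧ ENNReal.ofReal s < volume {z : ℂ | t < u z}}.Nonempty :=
    ⟨0, le_refl 0, hs⟩
  rw [hustar] at htlt
  obtain ⟨t', ht', htt'⟩ := exists_lt_of_lt_csSup hne htlt
  exact le_trans ht'.2.le (mu_anti u htt'.le)

private lemma ustar_zero (u : ℂ → ℝ) (ustar : ℝ → ℝ)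
    (hustar : ∀ s, ustar s =
      sSup {t : ℝ | 0 ≤ t ∧ ENNReal.ofReal s < volume {z : ℂ | t < u z}})
    {s : ℝ} (hs : volume {z : ℂ | 0 < u z} ≤ ENNReal.ofReal s) :
    ustar s = 0 := by
  rw [hustar]
  convert Real.sSup_empty
  rw [Set.eq_empty_iff_forall_notMem]
  rintro t ⟨ht0, hts⟩
  exact absurd (lt_of_lt_of_le hts (le_trans (mu_anti u ht0) hs)) (lt_irrefl _)

private lemma ustar_right (u : ℂ → ℝ) {M : ℝ} (hM : ∀ z, u z ≤ M) (ustar : ℝ → ℝ)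
    (hustar : ∀ s, ustar s =
      sSup {t : ℝ | 0 ≤ t ∧ ENNReal.ofReal s < volume {z : ℂ | t < u z}})
    {s ε : ℝ} (hε : 0 < ε) :
    ∃ δ > 0, ustar s - ε < ustar (s + δ) := by
  by_cases hneg : ustar s - ε < 0
  · exact ⟨1, one_pos, lt_of_lt_of_le hneg (ustar_nonneg u ustar hustar (s + 1))⟩
  · push_neg at hneg
    have hlt : ustar s - ε < sSup {t : ℝ | 0 ≤ t ∧ ENNReal.ofReal s < volume {z : ℂ | t < u z}} := by
      rw [← hustar s]; linarith
    have hne : {t : ℝ | 0 ≤ t ∧ ENNReal.ofReal s < volume {z : ℂ | t < u z}}.Nonempty := by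
      by_contra hc
      rw [Set.not_nonempty_iff_eq_empty] at hc
      have : ustar s = 0 := by rw [hustar s, hc, Real.sSup_empty]
      linarith
    obtain ⟨t', ht', htt'⟩ := exists_lt_of_lt_csSup hne hlt
    obtain ⟨r, _, hr1, hr2⟩ := ENNReal.lt_iff_exists_real_btwn.1 ht'.2
    have hsr : s < r := by
      by_contra hc
      push_neg at hc
      exact absurd (lt_of_lt_of_le hr1 (ENNReal.ofReal_le_ofReal hc)) (lt_irrefl _)
    refine ⟨r - s, by linarith, ?_⟩
    have hle2 : t' ≤ ustar (s + (r - s)) := by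
      rw [hustar]
      refine le_csSup (Tset_bdd u hM _) ⟨ht'.1, ?_⟩
      have : s + (r - s) = r := by ring
      rw [this]
      exact hr2
    linarith

private lemma ustar_left (u : ℂ → ℝ) (hcont : Continuous u) (hint : Integrable u)
    (hdecay : Tendsto u (cocompact ℂ) (nhds 0))
    {M : ℝ} (hM : ∀ z, u z ≤ M) (ustar : ℝ → ℝ)
    (hustar : ∀ s, ustar s =
      sSup {t : ℝ | 0 ≤ t ∧ ENNReal.ofReal s < volume {z : ℂ | t < u z}})
    {s ε : ℝ} (hs : 0 < s) (hε : 0 < ε) :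
    ∃ δ > 0, δ ≤ s ∧ ustar (s - δ) < ustar s + ε := by
  have hu0 : 0 ≤ ustar s := ustar_nonneg u ustar hustar s
  have hb'pos : 0 < ustar s + ε/2 := by linarith
  have hble : volume {z : ℂ | ustar s + ε/2 < u z} ≤ ENNReal.ofReal s :=
    le_trans (mu_anti u (by linarith : ustar s ≤ ustar s + ε/2)) (ustar_mu_le u hM ustar hustar s)
  have key : volume {z : ℂ | ustar s + ε/2 < u z} < ENNReal.ofReal s := by
    rcases eq_or_ne (volume {z : ℂ | ustar s + ε/2 < u z}) 0 with h0 | h0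
    · rw [h0]; exact ENNReal.ofReal_pos.mpr hs
    · have hstrict := mu_strict u hcont hint hdecay
        (t1 := ustar s + ε/4) (t2 := ustar s + ε/2) (by linarith) (by linarith)
        (pos_iff_ne_zero.mpr h0)
      refine lt_of_lt_of_le hstrict ?_
      exact le_trans (mu_anti u (by linarith : ustar s ≤ ustar s + ε/4))
        (ustar_mu_le u hM ustar hustar s)
  have hfin : volume {z : ℂ | ustar s + ε/2 < u z} ≠ ∞ := mu_fin u hint hb'pos
  set m := (volume {z : ℂ | ustar s + ε/2 < u z}).toReal with hm_def
  have hm0 : 0 ≤ m := ENNReal.toReal_nonneg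
  have hms : m < s := ENNReal.toReal_lt_of_lt_ofReal key
  refine ⟨(s - m)/2, by linarith, by linarith, ?_⟩
  have hup : ustar (s - (s - m)/2) ≤ ustar s + ε/2 := by
    rw [hustar]
    refine Real.sSup_le (fun t ht => ?_) (by linarith)
    by_contra hc
    push_neg at hc
    have h1 : volume {z : ℂ | t < u z} ≤ volume {z : ℂ | ustar s + ε/2 < u z} :=
      mu_anti u hc.le
    have h2 : volume {z : ℂ | ustar s + ε/2 < u z} = ENNReal.ofReal m :=
      (ENNReal.ofReal_toReal hfin).symm
    have h3 : ENNReal.ofReal m ≤ ENNReal.ofReal (s - (s - m)/2) :=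
      ENNReal.ofReal_le_ofReal (by linarith)
    exact absurd (lt_of_lt_of_le ht.2 (le_trans h1 (h2 ▸ h3))) (lt_irrefl _)
  linarith

private lemma ustar_cont (u : ℂ → ℝ) (hcont : Continuous u) (hint : Integrable u)
    (hdecay : Tendsto u (cocompact ℂ) (nhds 0))
    {M : ℝ} (hM : ∀ z, u z ≤ M) (ustar : ℝ → ℝ)
    (hustar : ∀ s, ustar s =
      sSup {t : ℝ | 0 ≤ t ∧ ENNReal.ofReal s < volume {z : ℂ | t < u z}}) :
    ContinuousOn ustar (Set.Ici 0) := by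
  have hanti : Antitone ustar := ustar_anti u hM ustar hustar
  intro s hs
  rw [Metric.continuousWithinAt_iff]
  intro ε hε
  obtain ⟨δ1, hδ1, hR⟩ := ustar_right u hM ustar hustar (s := s) hε
  by_cases hs0 : 0 < s
  · obtain ⟨δ2, hδ2, hδ2s, hL⟩ := ustar_left u hcont hint hdecay hM ustar hustar hs0 hε
    refine ⟨min δ1 δ2, lt_min hδ1 hδ2, fun y hy hdist => ?_⟩
    rw [Real.dist_eq] at hdist ⊢
    rw [abs_lt] at hdist ⊢
    rcases le_or_gt s y with hys | hys
    · have h1 : ustar y ≤ ustar s := hanti hys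
      have h2 : ustar (s + δ1) ≤ ustar y := hanti (by cases' hdist with a b; cases' min_le_iff.mp (le_refl (min δ1 δ2)) with h h <;> linarith [min_le_left δ1 δ2])
      constructor <;> linarith
    · have h1 : ustar s ≤ ustar y := hanti hys.le
      have h2 : ustar y ≤ ustar (s - δ2) := hanti (by linarith [min_le_right δ1 δ2, hdist.1])
      constructor <;> linarith
  · have hseq : s = 0 := le_antisymm (not_lt.mp hs0) hs
    refine ⟨δ1, hδ1, fun y hy hdist => ?_⟩
    rw [Real.dist_eq] at hdist ⊢
    rw [abs_lt] at hdist ⊢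
    have hys : s ≤ y := hseq ▸ hy
    have h1 : ustar y ≤ ustar s := hanti hys
    have h2 : ustar (s + δ1) ≤ ustar y := hanti (by linarith [hdist.2])
    constructor <;> linarith

example (u : ℂ → ℝ) (hcont : Continuous u) : MeasurableSet {z : ℂ | (0:ℝ) < u z ∧ u z ≤ 1} := by
  exact (isOpen_lt continuous_const hcont).measurableSet.inter
    (measurableSet_le hcont.measurable measurable_const)

private lemma int_diff (u : ℂ → ℝ) (hcont : Continuous u) (hint : Integrable u)
    {a b : ℝ} (hab : a ≤ b) :
    (∫ z in {z : ℂ | a < u z}, u z) - (∫ z in {z : ℂ | b < u z}, u z)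
      = ∫ z in {z : ℂ | a < u z ∧ u z ≤ b}, u z := by
  have hsub : {z : ℂ | b < u z} ⊆ {z : ℂ | a < u z} := fun z hz => lt_of_le_of_lt hab hz
  have hdiffset : {z : ℂ | a < u z} \ {z : ℂ | b < u z} = {z : ℂ | a < u z ∧ u z ≤ b} := by
    ext z
    simp only [Set.mem_diff, Set.mem_setOf_eq, not_lt]
  rw [← hdiffset, integral_diff (mu_meas u hcont b) hint.integrableOn hsub]

private lemma int_bounds (u : ℂ → ℝ) (hint : Integrable u) {D : Set ℂ} (hD : MeasurableSet D)
    (hDfin : volume D ≠ ∞) {a b : ℝ} (hl : ∀ z ∈ D, a ≤ u z) (hb : ∀ z ∈ D, u z ≤ b) :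
    a * (volume D).toReal ≤ (∫ z in D, u z) ∧ (∫ z in D, u z) ≤ b * (volume D).toReal := by
  have hci : IntegrableOn (fun _ : ℂ => a) D volume :=
    integrableOn_const hDfin
  have hcb : IntegrableOn (fun _ : ℂ => b) D volume :=
    integrableOn_const hDfin
  constructor
  · have := setIntegral_mono_on hci hint.integrableOn hD hl
    rwa [setIntegral_const, smul_eq_mul, mul_comm] at this
  · have := setIntegral_mono_on hint.integrableOn hcb hD hb
    rwa [setIntegral_const, smul_eq_mul, mul_comm] at this

private lemma squeeze (u : ℂ → ℝ) (hcont : Continuous u) (hnonneg : ∀ z, 0 ≤ u z)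
    (hint : Integrable u) (hdecay : Tendsto u (cocompact ℂ) (nhds 0))
    (hlevel : ∀ t : ℝ, 0 < t → volume {z : ℂ | u z = t} = 0)
    {M : ℝ} (hM : ∀ z, u z ≤ M) (ustar : ℝ → ℝ)
    (hustar : ∀ s, ustar s =
      sSup {t : ℝ | 0 ≤ t ∧ ENNReal.ofReal s < volume {z : ℂ | t < u z}})
    {s1 s2 : ℝ} (h1 : 0 ≤ s1) (h12 : s1 ≤ s2) :
    ustar s2 * (s2 - s1) ≤
      (∫ z in {z : ℂ | ustar s2 < u z}, u z) - (∫ z in {z : ℂ | ustar s1 < u z}, u z) ∧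
    (∫ z in {z : ℂ | ustar s2 < u z}, u z) - (∫ z in {z : ℂ | ustar s1 < u z}, u z) ≤
      ustar s1 * (s2 - s1) := by
  have hab : ustar s2 ≤ ustar s1 := ustar_anti u hM ustar hustar h12
  have ha0 : 0 ≤ ustar s2 := ustar_nonneg u ustar hustar s2
  have hb0 : 0 ≤ ustar s1 := ustar_nonneg u ustar hustar s1
  set a := ustar s2 with ha_def
  set b := ustar s1 with hb_def
  have hdiff := int_diff u hcont hint hab
  set D := {z : ℂ | a < u z ∧ u z ≤ b} with hD_def
  have hD : MeasurableSet D :=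
    (isOpen_lt continuous_const hcont).measurableSet.inter
      (measurableSet_le hcont.measurable measurable_const)
  rw [hdiff]
  rcases eq_or_lt_of_le hb0 with hb0' | hbpos
  · -- b = 0, hence a = 0 and D = ∅
    have haz : a = 0 := le_antisymm (hb0' ▸ hab) ha0
    have hDe : D = ∅ := by
      rw [Set.eq_empty_iff_forall_notMem]
      rintro z ⟨hz1, hz2⟩
      rw [haz] at hz1
      rw [← hb0'] at hz2
      exact absurd hz2 (not_le.mpr hz1)
    rw [hDe, haz, ← hb0']
    simp
  · -- 0 < b
    have hμb_fin : volume {z : ℂ | b < u z} ≠ ∞ := mu_fin u hint hbpos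
    have hs1lt : ENNReal.ofReal s1 < volume {z : ℂ | 0 < u z} := by
      by_contra hc
      push_neg at hc
      exact absurd (ustar_zero u ustar hustar hc) hbpos.ne'
    have hμb : volume {z : ℂ | b < u z} = ENNReal.ofReal s1 :=
      ustar_mu_eq u hcont hint hlevel hM ustar hustar hs1lt
    have hsub : {z : ℂ | b < u z} ⊆ {z : ℂ | a < u z} := fun z hz => lt_of_le_of_lt hab hz
    have hDset : D = {z : ℂ | a < u z} \ {z : ℂ | b < u z} := by
      ext z
      simp only [hD_def, Set.mem_diff, Set.mem_setOf_eq, not_lt]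
    have hDeq : volume D = volume {z : ℂ | a < u z} - volume {z : ℂ | b < u z} := by
      rw [hDset]
      exact measure_diff hsub (mu_meas u hcont b).nullMeasurableSet hμb_fin
    have hμa_le : volume {z : ℂ | a < u z} ≤ ENNReal.ofReal s2 :=
      ustar_mu_le u hM ustar hustar s2
    have hDle : volume D ≤ ENNReal.ofReal (s2 - s1) := by
      rw [hDeq, ENNReal.ofReal_sub _ h1, hμb]
      exact tsub_le_tsub hμa_le (le_refl _)
    have hDfin : volume D ≠ ∞ :=
      (lt_of_le_of_lt hDle ENNReal.ofReal_lt_top).ne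
    have hbnd := int_bounds u hint hD hDfin
      (a := a) (b := b) (fun z hz => hz.1.le) (fun z hz => hz.2)
    have htR : (volume D).toReal ≤ s2 - s1 :=
      ENNReal.toReal_le_of_le_ofReal (by linarith) hDle
    constructor
    · -- lower bound
      rcases eq_or_lt_of_le ha0 with ha0' | hapos
      · rw [← ha0', zero_mul]
        exact setIntegral_nonneg hD (fun z _ => hnonneg z)
      · have hs2lt : ENNReal.ofReal s2 < volume {z : ℂ | 0 < u z} := by
          by_contra hc
          push_neg at hc
          exact absurd (ustar_zero u ustar hustar hc) hapos.ne'
        have hμa : volume {z : ℂ | a < u z} = ENNReal.ofReal s2 :=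
          ustar_mu_eq u hcont hint hlevel hM ustar hustar hs2lt
        have hDexact : volume D = ENNReal.ofReal (s2 - s1) := by
          rw [hDeq, hμa, hμb, ← ENNReal.ofReal_sub _ h1]
        have : (volume D).toReal = s2 - s1 := by
          rw [hDexact, ENNReal.toReal_ofReal (by linarith)]
        calc a * (s2 - s1) = a * (volume D).toReal := by rw [this]
          _ ≤ _ := hbnd.1
    · -- upper bound
      calc (∫ z in D, u z) ≤ b * (volume D).toReal := hbnd.2
        _ ≤ b * (s2 - s1) := mul_le_mul_of_nonneg_left htR hb0


/-- The function `I(s) = ∫_{{u > u*(s)}} u` is `C¹` on `[0,∞)` with `I'(s) = u*(s)`,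
where `u*` is the decreasing rearrangement of `u`. -/
theorem superlevel_integral_derivative
    (u : ℂ → ℝ) (hcont : Continuous u) (hnonneg : ∀ z, 0 ≤ u z)
    (hint : Integrable u)
    (hdecay : Tendsto u (cocompact ℂ) (nhds 0))
    (hlevel : ∀ t : ℝ, 0 < t → volume {z : ℂ | u z = t} = 0)
    (ustar : ℝ → ℝ)
    (hustar : ∀ s, ustar s =
      sSup {t : ℝ | 0 ≤ t ∧ ENNReal.ofReal s < volume {z : ℂ | t < u z}})
    (I : ℝ → ℝ)
    (hI : ∀ s, I s = ∫ z in {z : ℂ | ustar s < u z}, u z) :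
    (∀ s ∈ Set.Ici (0:ℝ), HasDerivWithinAt I (ustar s) (Set.Ici 0) s) ∧
    ContinuousOn ustar (Set.Ici 0) := by
  obtain ⟨M, hMpos, hM⟩ := u_bdd u hcont hdecay
  have hcontu : ContinuousOn ustar (Set.Ici 0) :=
    ustar_cont u hcont hint hdecay hM ustar hustar
  refine ⟨?_, hcontu⟩
  intro s hs
  rw [hasDerivWithinAt_iff_tendsto_slope]
  have hIdiff : ∀ y1 y2 : ℝ, 0 ≤ y1 → y1 ≤ y2 →
      ustar y2 * (y2 - y1) ≤ I y2 - I y1 ∧ I y2 - I y1 ≤ ustar y1 * (y2 - y1) := by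
    intro y1 y2 h1 h12
    rw [hI y1, hI y2]
    exact squeeze u hcont hnonneg hint hdecay hlevel hM ustar hustar h1 h12
  have hs0 : (0:ℝ) ≤ s := hs
  have hslope : ∀ y ∈ Set.Ici (0:ℝ) \ {s},
      min (ustar s) (ustar y) ≤ slope I s y ∧ slope I s y ≤ max (ustar s) (ustar y) := by
    rintro y ⟨hy0, hyne⟩
    have hyne' : y ≠ s := hyne
    rw [slope_def_field]
    rcases lt_or_gt_of_ne hyne' with hys | hys
    · -- y < s
      have h := hIdiff y s hy0 hys.le
      have hpos : 0 < s - y := by linarith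
      have heq : (I y - I s) / (y - s) = (I s - I y) / (s - y) := by
        rw [div_eq_div_iff (by linarith) (by linarith)]
        ring
      rw [heq]
      constructor
      · refine le_trans (min_le_left _ _) ?_
        rw [le_div_iff₀ hpos]
        exact h.1
      · refine le_trans ?_ (le_max_right _ _)
        rw [div_le_iff₀ hpos]
        exact h.2
    · -- s < y
      have h := hIdiff s y hs0 hys.le
      have hpos : 0 < y - s := by linarith
      constructor
      · refine le_trans (min_le_right _ _) ?_
        rw [le_div_iff₀ hpos]
        exact h.1
      · refine le_trans ?_ (le_max_left _ _)
        rw [div_le_iff₀ hpos]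
        exact h.2
  have hcw : Tendsto ustar (nhdsWithin s (Set.Ici 0 \ {s})) (nhds (ustar s)) :=
    (hcontu s hs).mono Set.diff_subset
  have hmin : Tendsto (fun y => min (ustar s) (ustar y)) (nhdsWithin s (Set.Ici 0 \ {s}))
      (nhds (ustar s)) := by
    have := Filter.Tendsto.min (tendsto_const_nhds (x := ustar s)) hcw
    rwa [min_self] at this
  have hmax : Tendsto (fun y => max (ustar s) (ustar y)) (nhdsWithin s (Set.Ici 0 \ {s}))
      (nhds (ustar s)) := by
    have := Filter.Tendsto.max (tendsto_const_nhds (x := ustar s)) hcw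
    rwa [max_self] at this
  refine tendsto_of_tendsto_of_tendsto_of_le_of_le' hmin hmax ?_ ?_
  · exact eventually_of_mem self_mem_nhdsWithin (fun y hy => (hslope y hy).1)
  · exact eventually_of_mem self_mem_nhdsWithin (fun y hy => (hslope y hy).2)
end

section
/- Let I : [0,∞) → [0,1) be C¹ with I(0) = 0, I' locally absolutely continuous, I''(s) + I'(s) ≥ 0 a.e., and lim_{s→∞} I(s) = 1. Then I(s) ≤ 1 - e^{-s} for all s ≥ 0. Moreover, if equality holds at some s₀ > 0 then I(s) = 1 - e^{-s} for all s ≥ 0. -/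
open Real MeasureTheory

/-- ODE/convexity lemma: if `I : [0,∞) → [0,1)` is `C¹` with `I(0) = 0`, `I'`
locally absolutely continuous with `I'' + I' ≥ 0` a.e., and `I(s) → 1` as
`s → ∞`, then `I(s) ≤ 1 - e^{-s}`, with global equality if equality holds at
one point `s₀ > 0`. -/
theorem ode_comparison_lemma
    (I D D2 : ℝ → ℝ)
    (hI0 : I 0 = 0)
    (hrange : ∀ s : ℝ, 0 ≤ s → 0 ≤ I s ∧ I s < 1)
    (hD : ∀ s : ℝ, 0 ≤ s → HasDerivAt I (D s) s)
    (hDcont : ContinuousOn D (Set.Ici 0))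
    (hAC : ∀ a b : ℝ, 0 ≤ a → a ≤ b → D b - D a = ∫ s in a..b, D2 s)
    (hineq : ∀ᵐ s : ℝ, 0 ≤ s → 0 ≤ D2 s + D s)
    (hlim : Filter.Tendsto I Filter.atTop (nhds 1)) :
    (∀ s : ℝ, 0 ≤ s → I s ≤ 1 - Real.exp (-s)) ∧
    (∀ s₀ : ℝ, 0 < s₀ → I s₀ = 1 - Real.exp (-s₀) →
      ∀ s : ℝ, 0 ≤ s → I s = 1 - Real.exp (-s)) := by
  -- Fundamental theorem of calculus for `I`
  have hDint : ∀ a b : ℝ, 0 ≤ a → a ≤ b → IntervalIntegrable D volume a b := by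
    intro a b ha hab
    apply ContinuousOn.intervalIntegrable
    apply hDcont.mono
    rw [Set.uIcc_of_le hab]
    exact fun x hx => ha.trans hx.1
  have hFTC : ∀ a b : ℝ, 0 ≤ a → a ≤ b → (∫ s in a..b, D s) = I b - I a := by
    intro a b ha hab
    apply intervalIntegral.integral_eq_sub_of_hasDerivAt
    · intro x hx
      rw [Set.uIcc_of_le hab] at hx
      exact hD x (ha.trans hx.1)
    · exact hDint a b ha hab
  -- Step 1: `D2` is interval integrable on subintervals of `[0,∞)`.
  have hInt : ∀ u v : ℝ, 0 ≤ u → u ≤ v → IntervalIntegrable D2 volume u v := by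
    intro u v hu huv
    by_contra hni
    have hDb : ∀ b : ℝ, v ≤ b → D b = D u := by
      intro b hb
      have hsub : Set.uIcc u v ⊆ Set.uIcc u b := by
        rw [Set.uIcc_of_le huv, Set.uIcc_of_le (huv.trans hb)]
        exact Set.Icc_subset_Icc le_rfl hb
      have hni' : ¬ IntervalIntegrable D2 volume u b := fun h => hni (h.mono_set hsub)
      have h := hAC u b hu (huv.trans hb)
      rw [intervalIntegral.integral_undef hni'] at h
      linarith
    have h0v : (0:ℝ) ≤ v := hu.trans huv
    have hIs : ∀ s : ℝ, v ≤ s → I s = I v + D u * (s - v) := by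
      intro s hs
      have hconst : (∫ x in v..s, D x) = D u * (s - v) := by
        rw [intervalIntegral.integral_congr (g := fun _ => D u)
          (fun x hx => by rw [Set.uIcc_of_le hs] at hx; exact hDb x hx.1)]
        rw [intervalIntegral.integral_const, smul_eq_mul]
        ring
      have h := hFTC v s h0v hs
      rw [hconst] at h
      linarith
    rcases lt_trichotomy (D u) 0 with hneg | hzero | hpos
    · -- `I` becomes negative
      have hne : D u ≠ 0 := ne_of_lt hneg
      have ht : 0 < (I v + 1) / (-D u) :=
        div_pos (by linarith [(hrange v h0v).1]) (by linarith)
      have hsv : v ≤ v + (I v + 1) / (-D u) := by linarith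
      have hval := hIs _ hsv
      have hsimp : v + (I v + 1) / (-D u) - v = (I v + 1) / (-D u) := by ring
      rw [hsimp] at hval
      have hprod : D u * ((I v + 1) / (-D u)) = -(I v + 1) := by
        rw [div_neg, mul_neg, mul_div_assoc', mul_div_cancel_left₀ _ hne]
      have hIv : I (v + (I v + 1) / (-D u)) = -1 := by
        rw [hval, hprod]; ring
      have := (hrange _ (h0v.trans hsv)).1
      linarith
    · -- `I` is eventually constant, so `I v = 1`
      have hconstI : Filter.Tendsto I Filter.atTop (nhds (I v)) := by
        apply Filter.Tendsto.congr' _ tendsto_const_nhds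
        filter_upwards [Filter.eventually_ge_atTop v] with s hs
        rw [hIs s hs, hzero]; ring
      have h1 : I v = 1 := tendsto_nhds_unique hconstI hlim
      linarith [(hrange v h0v).2]
    · -- `I` exceeds 1
      have hne : D u ≠ 0 := ne_of_gt hpos
      have ht : 0 < (1 - I v) / D u :=
        div_pos (by linarith [(hrange v h0v).2]) hpos
      have hsv : v ≤ v + ((1 - I v) / D u + 1) := by linarith
      have hval := hIs _ hsv
      have hsimp : v + ((1 - I v) / D u + 1) - v = (1 - I v) / D u + 1 := by ring
      rw [hsimp] at hval
      have hprod : D u * ((1 - I v) / D u + 1) = 1 - I v + D u := by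
        field_simp
      have hIv : I (v + ((1 - I v) / D u + 1)) = 1 + D u := by
        rw [hval, hprod]; ring
      have := (hrange _ (h0v.trans hsv)).2
      linarith
  -- Step 2: `J = D + I` is nondecreasing
  have hJ : ∀ a b : ℝ, 0 ≤ a → a ≤ b → D a + I a ≤ D b + I b := by
    intro a b ha hab
    have h1 : D b - D a = ∫ s in a..b, D2 s := hAC a b ha hab
    have h2 := hFTC a b ha hab
    have hadd : (∫ s in a..b, (D2 s + D s)) = (∫ s in a..b, D2 s) + ∫ s in a..b, D s :=
      intervalIntegral.integral_add (hInt a b ha hab) (hDint a b ha hab)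
    have hpos : (0:ℝ) ≤ ∫ s in a..b, (D2 s + D s) := by
      apply intervalIntegral.integral_nonneg_of_ae_restrict hab
      have h3 : ∀ᵐ x : ℝ ∂(volume.restrict (Set.Icc a b)), 0 ≤ x :=
        ae_restrict_of_forall_mem measurableSet_Icc (fun x hx => ha.trans hx.1)
      filter_upwards [ae_restrict_of_ae hineq, h3] with x hx hx0
      exact hx hx0
    rw [hadd, ← h1, h2] at hpos
    linarith
  -- Step 3: `D + I ≤ 1`
  have hJ1 : ∀ s : ℝ, 0 ≤ s → D s + I s ≤ 1 := by
    intro s₀ hs₀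
    by_contra hgt
    push_neg at hgt
    obtain ⟨ε, hε⟩ : ∃ ε : ℝ, ε = D s₀ + I s₀ - 1 := ⟨_, rfl⟩
    have hεpos : 0 < ε := by rw [hε]; linarith
    have h2ε : 0 < 2 / ε := div_pos two_pos hεpos
    have hss : s₀ ≤ s₀ + 2 / ε := by linarith
    have hmono : (∫ x in s₀..(s₀ + 2 / ε), (fun _ => ε) x)
        ≤ ∫ x in s₀..(s₀ + 2 / ε), D x := by
      apply intervalIntegral.integral_mono_on hss
        (intervalIntegrable_const) (hDint s₀ _ hs₀ hss)
      intro x hx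
      have hx0 : (0:ℝ) ≤ x := hs₀.trans hx.1
      have := hJ s₀ x hs₀ hx.1
      have := (hrange x hx0).2
      linarith
    rw [hFTC s₀ _ hs₀ hss, intervalIntegral.integral_const, smul_eq_mul] at hmono
    have heval : (s₀ + 2 / ε - s₀) * ε = 2 := by
      field_simp
      ring
    rw [heval] at hmono
    have := (hrange _ (hs₀.trans hss)).2
    have := (hrange s₀ hs₀).1
    linarith
  -- The comparison function `K`
  set K : ℝ → ℝ := fun s => Real.exp s * (I s - 1) + 1 with hK
  have hKderiv : ∀ x : ℝ, 0 ≤ x → HasDerivAt K (Real.exp x * (D x + I x - 1)) x := by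
    intro x hx
    have h1 : HasDerivAt (fun s => Real.exp s * (I s - 1) + 1)
        (Real.exp x * (I x - 1) + Real.exp x * D x) x := by
      exact (((Real.hasDerivAt_exp x).mul ((hD x hx).sub_const 1)).add_const 1)
    convert h1 using 1
    ring
  have hKcont : ContinuousOn K (Set.Ici 0) :=
    fun x hx => (hKderiv x hx).continuousAt.continuousWithinAt
  have hKdiff : DifferentiableOn ℝ K (interior (Set.Ici (0:ℝ))) := by
    rw [interior_Ici]
    exact fun x hx => ((hKderiv x (le_of_lt hx)).differentiableAt).differentiableWithinAt
  have hKanti : AntitoneOn K (Set.Ici 0) := by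
    apply antitoneOn_of_deriv_nonpos (convex_Ici 0) hKcont hKdiff
    intro x hx
    rw [interior_Ici] at hx
    rw [(hKderiv x hx.le).deriv]
    have := hJ1 x hx.le
    nlinarith [Real.exp_pos x]
  have hK0 : K 0 = 0 := by
    simp [hK, hI0]
  have hKle : ∀ s : ℝ, 0 ≤ s → K s ≤ 0 := by
    intro s hs
    have := hKanti (Set.self_mem_Ici) hs hs
    rw [hK0] at this
    exact this
  have hmain : ∀ s : ℝ, 0 ≤ s → I s ≤ 1 - Real.exp (-s) := by
    intro s hs
    have h : Real.exp s * (I s - 1) + 1 ≤ 0 := hKle s hs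
    have hepos := Real.exp_pos s
    have h2 : I s - 1 ≤ -1 / Real.exp s := by
      rw [le_div_iff₀ hepos]
      nlinarith
    have h3 : -1 / Real.exp s = -(Real.exp s)⁻¹ := by field_simp
    rw [Real.exp_neg]
    linarith
  refine ⟨hmain, ?_⟩
  intro s₀ hs₀pos heq s hs
  have hKs₀ : K s₀ = 0 := by
    rw [hK]
    simp only [heq, Real.exp_neg]
    field_simp
    ring
  -- K vanishes on [0, s₀]
  have hKzero : ∀ x : ℝ, 0 ≤ x → x ≤ s₀ → K x = 0 := by
    intro x hx0 hxs
    have h1 := hKanti (Set.self_mem_Ici) (show x ∈ Set.Ici (0:ℝ) from hx0) hx0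
    have h2 := hKanti (show x ∈ Set.Ici (0:ℝ) from hx0) (show s₀ ∈ Set.Ici (0:ℝ) from hs₀pos.le) hxs
    rw [hK0] at h1
    rw [hKs₀] at h2
    linarith
  -- hence J = 1 on (0, s₀)
  have hJone : ∀ x : ℝ, 0 < x → x < s₀ → D x + I x = 1 := by
    intro x hx0 hxs
    have hKd0 : HasDerivAt K 0 x := by
      have hev : K =ᶠ[nhds x] fun _ => (0:ℝ) := by
        filter_upwards [Ioo_mem_nhds hx0 hxs] with y hy
        exact hKzero y hy.1.le hy.2.le
      exact (hasDerivAt_const x (0:ℝ)).congr_of_eventuallyEq hev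
    have huniq : Real.exp x * (D x + I x - 1) = 0 :=
      (hKderiv x hx0.le).unique hKd0
    have := Real.exp_pos x
    nlinarith
  -- hence J = 1 on all of (0, ∞)
  have hJall : ∀ x : ℝ, 0 < x → D x + I x = 1 := by
    intro x hx0
    rcases lt_or_ge x s₀ with h | h
    · exact hJone x hx0 h
    · have hx₀ : D (s₀/2) + I (s₀/2) = 1 :=
        hJone (s₀/2) (by linarith) (by linarith)
      have hle := hJ (s₀/2) x (by linarith) (by linarith)
      have := hJ1 x hx0.le
      linarith
  -- K monotone too, hence constant 0
  have hKmono : MonotoneOn K (Set.Ici 0) := by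
    apply monotoneOn_of_deriv_nonneg (convex_Ici 0) hKcont hKdiff
    intro x hx
    rw [interior_Ici] at hx
    rw [(hKderiv x hx.le).deriv, hJall x hx]
    simp
  have hKeq : Real.exp s * (I s - 1) + 1 = 0 := by
    have h1 := hKle s hs
    have h2 := hKmono (Set.self_mem_Ici) hs hs
    rw [hK0] at h2
    have h3 : K s = 0 := le_antisymm h1 h2
    exact h3
  have hepos := Real.exp_pos s
  have h2 : I s - 1 = -1 / Real.exp s := by
    rw [eq_div_iff (ne_of_gt hepos)]
    nlinarith
  have h3 : -1 / Real.exp s = -(Real.exp s)⁻¹ := by field_simp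
  rw [Real.exp_neg]
  linarith
end

section
/- If B ⊂ ℂ is the ball of radius r centered at z₀ and F = c F_{z₀} with c ≠ 0, then ∫_B |F(z)|² e^{-π|z|²} dz = |c|² (1 - e^{-π r²}) = (1 - e^{-|B|}) ‖F‖²_{F²}. -/
open Real MeasureTheory

lemma fock_pointwise_key (z₀ c z : ℂ) :
    ‖c * Complex.exp (-(π * ‖z₀‖ ^ 2) / 2 + π * z * (starRingEnd ℂ) z₀)‖ ^ 2
      * Real.exp (-π * ‖z‖ ^ 2)
    = ‖c‖ ^ 2 * Real.exp (-π * ‖z - z₀‖ ^ 2) := by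
  simp only [norm_mul, mul_pow]
  rw [show (-(↑π * ↑‖z₀‖ ^ 2) / 2 + ↑π * z * (starRingEnd ℂ) z₀ : ℂ)
      = Complex.ofReal (-(π * ‖z₀‖ ^ 2) / 2) + ↑π * z * (starRingEnd ℂ) z₀ by
    push_cast; ring]
  rw [Complex.norm_exp, mul_assoc,
    ← Real.exp_nat_mul, ← Real.exp_add]
  congr 1
  simp only [Complex.add_re, Complex.ofReal_re, Complex.mul_re, Complex.ofReal_im,
    Complex.conj_re, Complex.conj_im, Complex.mul_im, Complex.sq_norm,
    Complex.normSq_apply, Complex.sub_re, Complex.sub_im]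
  push_cast
  ring

lemma fock_gaussian_whole : ∫ z : ℂ, Real.exp (-π * ‖z‖ ^ 2) = 1 := by
  rw [GaussianFourier.integral_rexp_neg_mul_sq_norm Real.pi_pos,
    Complex.finrank_real_complex]
  have hπ : (π : ℝ) ≠ 0 := Real.pi_ne_zero
  rw [div_self hπ]
  norm_num

lemma fock_interval_piece (r : ℝ) (hr : 0 < r) :
    ∫ ρ in Set.Ioo (0:ℝ) r, ρ * Real.exp (-π * ρ ^ 2)
      = (1 - Real.exp (-(π * r ^ 2))) / (2 * π) := by
  rw [← integral_Ioc_eq_integral_Ioo, ← intervalIntegral.integral_of_le hr.le]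
  have hπ : (π : ℝ) ≠ 0 := Real.pi_ne_zero
  have key : ∀ ρ : ℝ, HasDerivAt (fun ρ : ℝ => -Real.exp (-π * ρ ^ 2) / (2 * π))
      (ρ * Real.exp (-π * ρ ^ 2)) ρ := by
    intro ρ
    have h1 : HasDerivAt (fun ρ : ℝ => -π * ρ ^ 2) (-π * (2 * ρ)) ρ := by
      simpa using (hasDerivAt_pow 2 ρ).const_mul (-π)
    have h2 := (Real.hasDerivAt_exp (-π * ρ ^ 2)).comp ρ h1
    have h3 := (h2.div_const (2 * π)).neg
    have e1 : (fun ρ : ℝ => -Real.exp (-π * ρ ^ 2) / (2 * π))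
        = -fun x => (Real.exp ∘ fun ρ : ℝ => -π * ρ ^ 2) x / (2 * π) := by
      funext x
      simp [Function.comp, neg_div]
    rw [e1]
    refine h3.congr_deriv ?_
    · have h2π : (2 * π : ℝ) ≠ 0 := by positivity
      rw [← neg_div, div_eq_iff h2π]
      ring
  rw [intervalIntegral.integral_eq_sub_of_hasDerivAt (fun ρ _ => key ρ)
    (Continuous.intervalIntegrable (by continuity) 0 r)]
  norm_num
  ring

lemma fock_ball_gaussian (r : ℝ) (hr : 0 < r) :
    ∫ z in Metric.ball (0:ℂ) r, Real.exp (-π * ‖z‖ ^ 2)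
      = 1 - Real.exp (-(π * r ^ 2)) := by
  rw [← integral_indicator measurableSet_ball,
    ← Complex.integral_comp_polarCoord_symm]
  have htar : polarCoord.target = Set.Ioi (0:ℝ) ×ˢ Set.Ioo (-π) π := rfl
  have hcongr : ∀ p ∈ polarCoord.target,
      p.1 • Set.indicator (Metric.ball (0:ℂ) r) (fun z => Real.exp (-π * ‖z‖ ^ 2))
        (Complex.polarCoord.symm p)
      = (Set.indicator (Set.Ioo (0:ℝ) r) (fun ρ => ρ * Real.exp (-π * ρ ^ 2)) p.1)
          * (fun _ : ℝ => (1:ℝ)) p.2 := by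
    rintro ⟨ρ, θ⟩ hp
    rw [htar] at hp
    obtain ⟨hρ : (0:ℝ) < ρ, -⟩ := hp
    have hnorm : ‖Complex.polarCoord.symm (ρ, θ)‖ = ρ := by
      rw [Complex.norm_polarCoord_symm, abs_of_pos hρ]
    have hmem : Complex.polarCoord.symm (ρ, θ) ∈ Metric.ball (0:ℂ) r ↔ ρ < r := by
      rw [Metric.mem_ball, dist_zero_right, hnorm]
    by_cases hlt : ρ < r
    · rw [Set.indicator_of_mem (hmem.mpr hlt), Set.indicator_of_mem
        (show ρ ∈ Set.Ioo (0:ℝ) r from ⟨hρ, hlt⟩)]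
      simp [hnorm, smul_eq_mul]
    · rw [Set.indicator_of_notMem (fun h => hlt (hmem.mp h)),
        Set.indicator_of_notMem (fun h => hlt h.2)]
      simp
  rw [setIntegral_congr_fun polarCoord.open_target.measurableSet hcongr, htar,
    Measure.volume_eq_prod,
    setIntegral_prod_mul ((Set.Ioo (0:ℝ) r).indicator (fun ρ => ρ * Real.exp (-π * ρ ^ 2)))
      (fun _ : ℝ => (1:ℝ)),
    setIntegral_indicator measurableSet_Ioo,
    Set.inter_eq_self_of_subset_right Set.Ioo_subset_Ioi_self,
    fock_interval_piece r hr]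
  have h2π : (2 * π : ℝ) ≠ 0 := by positivity
  rw [setIntegral_const, smul_eq_mul, mul_one, Real.volume_real_Ioo_of_le (by linarith [Real.pi_pos]),
    show π - -π = 2 * π by ring, div_mul_cancel₀ _ h2π]

lemma fock_translate_ball (z₀ : ℂ) (r : ℝ) :
    ∫ z in Metric.ball z₀ r, Real.exp (-π * ‖z - z₀‖ ^ 2)
      = ∫ z in Metric.ball (0:ℂ) r, Real.exp (-π * ‖z‖ ^ 2) := by
  rw [← integral_indicator measurableSet_ball, ← integral_indicator measurableSet_ball,
    ← integral_add_right_eq_self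
      (fun z => (Metric.ball z₀ r).indicator (fun z => Real.exp (-π * ‖z - z₀‖ ^ 2)) z) z₀]
  congr 1
  funext z
  have hmem : z + z₀ ∈ Metric.ball z₀ r ↔ z ∈ Metric.ball (0:ℂ) r := by
    simp [Metric.mem_ball, dist_eq_norm]
  by_cases h : z ∈ Metric.ball (0:ℂ) r
  · rw [Set.indicator_of_mem (hmem.mpr h), Set.indicator_of_mem h]
    simp
  · rw [Set.indicator_of_notMem (fun hh => h (hmem.mp hh)), Set.indicator_of_notMem h]

lemma fock_translate_whole (z₀ : ℂ) :
    ∫ z : ℂ, Real.exp (-π * ‖z - z₀‖ ^ 2) = ∫ z : ℂ, Real.exp (-π * ‖z‖ ^ 2) := by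
  exact integral_sub_right_eq_self (fun z : ℂ => Real.exp (-π * ‖z‖ ^ 2)) z₀

/-- Direct computation: for `F = c F_{z₀}` and `B` the ball of radius `r` centered
at `z₀`, `∫_B |F|² e^{-π|z|²} = |c|²(1 - e^{-πr²}) = (1 - e^{-|B|}) ‖F‖²_{F²}`. -/
theorem fock_extremal_ball_computation
    (z₀ : ℂ) (c : ℂ) (hc : c ≠ 0) (r : ℝ) (hr : 0 < r)
    (F : ℂ → ℂ)
    (hF : F = fun z =>
      c * Complex.exp (-(π * ‖z₀‖ ^ 2) / 2 + π * z * (starRingEnd ℂ) z₀)) :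
    (∫ z in Metric.ball z₀ r, ‖F z‖ ^ 2 * Real.exp (-π * ‖z‖ ^ 2)
        = ‖c‖ ^ 2 * (1 - Real.exp (-(π * r ^ 2)))) ∧
    (∫ z in Metric.ball z₀ r, ‖F z‖ ^ 2 * Real.exp (-π * ‖z‖ ^ 2)
        = (1 - Real.exp (-(volume (Metric.ball z₀ r)).toReal)) *
          ∫ z : ℂ, ‖F z‖ ^ 2 * Real.exp (-π * ‖z‖ ^ 2)) := by
  have hpt : ∀ z : ℂ, ‖F z‖ ^ 2 * Real.exp (-π * ‖z‖ ^ 2)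
      = ‖c‖ ^ 2 * Real.exp (-π * ‖z - z₀‖ ^ 2) := by
    intro z
    rw [hF]
    exact fock_pointwise_key z₀ c z
  have h1 : ∫ z in Metric.ball z₀ r, ‖F z‖ ^ 2 * Real.exp (-π * ‖z‖ ^ 2)
      = ‖c‖ ^ 2 * (1 - Real.exp (-(π * r ^ 2))) := by
    simp_rw [hpt]
    rw [integral_const_mul, fock_translate_ball z₀ r, fock_ball_gaussian r hr]
  have h2 : ∫ z : ℂ, ‖F z‖ ^ 2 * Real.exp (-π * ‖z‖ ^ 2) = ‖c‖ ^ 2 := by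
    simp_rw [hpt]
    rw [integral_const_mul, fock_translate_whole z₀, fock_gaussian_whole, mul_one]
  have hvol : (volume (Metric.ball z₀ r)).toReal = π * r ^ 2 := by
    rw [Complex.volume_ball, ENNReal.toReal_mul, ENNReal.toReal_pow,
      ENNReal.toReal_ofReal hr.le]
    simp [mul_comm]
  refine ⟨h1, ?_⟩
  rw [h1, h2, hvol, mul_comm]
end
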